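/- Forward recursion policy reduces to a memory-cutoff policy: let t_coh > 0, let f(m) := ½(e^{−2m/t_coh} + 1) for m ∈ ℕ (so f(0) = 1), let p ∈ (0,1), and on the state set {−1} ∪ ℕ define the forward recursion decision function d^{FR} by: d^{FR}(−1) = 1 ('request'); for m ≥ 0, d^{FR}(m) = 0 ('wait') if f(m+1) > p·f(0) and d^{FR}(m) = 1 if f(m+1) ≤ p·f(0). Then: (i) if p ≤ 1/2, d^{FR} = d^{∞}, the decision function with d^{∞}(−1) = 1 and d^{∞}(m) = 0 for all m ≥ 0 (the t* = ∞ memory-cutoff policy); (ii) if p > 1/2, d^{FR} = d^{t*}, the memory-cutoff decision function with d^{t*}(m) = 0 for 0 ≤ m ≤ t*−1 and d^{t*}(m) = 1 for m = −1 and m ≥ t*, where t* = ⌈ −(t_coh/2)·ln(2p−1) − 1 ⌉. -/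
import Mathlib


noncomputable section

/-- Fidelity of the elementary link after `m` time steps of storage in amplitude-damping
memories with coherence time `tcoh`, for an ideal heralded Bell state:
`f(m) = (e^{-2m/t_coh} + 1)/2`. -/
def linkFid (tcoh : ℝ) (m : ℤ) : ℝ := (Real.exp (-2 * (m : ℝ) / tcoh) + 1) / 2

/-- The forward recursion decision function (`0` = wait, `1` = request):
`d^FR(-1) = 1`; for `m ≥ 0`, `d^FR(m) = 0` if `f(m+1) > p f(0)` and `d^FR(m) = 1`
if `f(m+1) ≤ p f(0)`. -/
def dFR (tcoh p : ℝ) : ℤ → ℕ := fun m =>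
  if m = -1 then 1
  else if p * linkFid tcoh 0 < linkFid tcoh (m + 1) then 0 else 1

/-- The `t* = ∞` memory-cutoff decision function: `d^∞(-1) = 1`, `d^∞(m) = 0` for `m ≥ 0`. -/
def dInf : ℤ → ℕ := fun m => if m = -1 then 1 else 0

/-- The memory-cutoff decision function with cutoff `t*`: `d(m) = 0` (wait) for
`0 ≤ m ≤ t* - 1`, and `d(m) = 1` (request) for `m = -1` and `m ≥ t*`. -/
def dCut (tstar : ℤ) : ℤ → ℕ := fun m =>
  if m = -1 then 1 else if m ≤ tstar - 1 then 0 else 1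

/-- **The forward recursion policy reduces to a memory-cutoff policy.** -/
theorem forward_recursion_is_memory_cutoff (tcoh : ℝ) (htcoh : 0 < tcoh)
    (p : ℝ) (hp0 : 0 < p) (hp1 : p < 1) :
    (p ≤ 1 / 2 → ∀ m : ℤ, -1 ≤ m → dFR tcoh p m = dInf m) ∧
    (1 / 2 < p → ∀ m : ℤ, -1 ≤ m →
      dFR tcoh p m = dCut ⌈-(tcoh / 2) * Real.log (2 * p - 1) - 1⌉ m) := by
  have hfid0 : linkFid tcoh 0 = 1 := by
    simp [linkFid]
  constructor
  · intro hp m hm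
    unfold dFR dInf
    by_cases h : m = -1
    · simp [h]
    · have hcond : p * linkFid tcoh 0 < linkFid tcoh (m + 1) := by
        rw [hfid0, mul_one]
        have := Real.exp_pos (-2 * ((m : ℝ) + 1) / tcoh)
        unfold linkFid
        push_cast
        linarith
      simp [h, hcond]
  · intro hp m hm
    unfold dFR dCut
    by_cases h : m = -1
    · simp [h]
    · have hm0 : 0 ≤ m := by omega
      have hp2 : 0 < 2 * p - 1 := by linarith
      set x : ℝ := -(tcoh / 2) * Real.log (2 * p - 1) - 1 with hx
      have key : (p * linkFid tcoh 0 < linkFid tcoh (m + 1)) ↔ (m ≤ ⌈x⌉ - 1) := by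
        rw [hfid0, mul_one]
        have h1 : p < linkFid tcoh (m + 1) ↔ 2 * p - 1 < Real.exp (-2 * ((m : ℝ) + 1) / tcoh) := by
          unfold linkFid
          push_cast
          constructor <;> intro <;> linarith
        have h2 : (2 * p - 1 < Real.exp (-2 * ((m : ℝ) + 1) / tcoh)) ↔
            Real.log (2 * p - 1) < -2 * ((m : ℝ) + 1) / tcoh := by
          rw [Real.log_lt_iff_lt_exp hp2]
        have h3 : (Real.log (2 * p - 1) < -2 * ((m : ℝ) + 1) / tcoh) ↔ (m : ℝ) < x := by
          rw [hx, lt_div_iff₀ htcoh]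
          constructor <;> intro hh <;> nlinarith
        have h4 : ((m : ℝ) < x) ↔ (m ≤ ⌈x⌉ - 1) := by
          rw [← Int.lt_ceil]
          omega
        rw [h1, h2, h3, h4]
      by_cases hc : p * linkFid tcoh 0 < linkFid tcoh (m + 1)
      · simp [h, hc, key.mp hc]
      · have : ¬ (m ≤ ⌈x⌉ - 1) := fun hh => hc (key.mpr hh)
        simp [h, hc, this]
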